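/- For every ν > 0 and every t > 0, the characteristic function of the Student's t distribution with ν degrees of freedom satisfies the recursion ∫_{-∞}^{∞} e^{itx} f_ν(x) dx = −(i/t) · √(ν/(ν+2)) · ∫_{-∞}^{∞} y · e^{i t √(ν/(ν+2)) · y} f_{ν+2}(y) dy, where the right-hand integral converges absolutely. -/

import Mathlib

/-!
Integrating by parts against `x ↦ exp (i t x)` gives
`i t ∫ exp (i t x) f_ν(x) dx = -∫ exp (i t x) f_ν'(x) dx`; no boundary terms appear since `f_ν`
and `f_ν'` are integrable. With `s = √(ν / (ν + 2))` the substitution `x = s y` turns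
`1 + x² / ν` into `1 + y² / (ν + 2)`, and `Γ(z + 1) = z Γ(z)` matches the normalising constants,
so that `f_ν'(s y) = -y f_{ν+2}(y)`. Substituting `x = s y` in `∫ exp (i t x) f_ν'(x) dx`
then gives the recursion.
-/

open MeasureTheory Real Complex

/-- Student's t density with `ν` degrees of freedom. -/
noncomputable def studentDensity (ν x : ℝ) : ℝ :=
  (Real.Gamma ((ν + 1) / 2) / (Real.sqrt (Real.pi * ν) * Real.Gamma (ν / 2))) *
    (1 + x ^ 2 / ν) ^ (-(ν + 1) / 2)

lemma integrable_one_add_sq_div_rpow_neg {a p : ℝ} (ha : 0 < a) (hp : 1 / 2 < p) :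
    Integrable fun x : ℝ => (1 + x ^ 2 / a) ^ (-p) := by
  have h := (integrable_rpow_neg_one_add_norm_sq (E := ℝ) (μ := volume) (r := 2 * p)
    (by simp only [Module.finrank_self, Nat.cast_one]; linarith)).comp_div (Real.sqrt_pos.2 ha).ne'
  refine h.congr (Filter.Eventually.of_forall fun x => ?_)
  simp only [Real.norm_eq_abs, sq_abs, div_pow, Real.sq_sqrt ha.le]
  ring_nf

lemma integrable_mul_one_add_sq_div_rpow_neg {a p : ℝ} (ha : 0 < a) (hp : 1 < p) :
    Integrable fun x : ℝ => x * (1 + x ^ 2 / a) ^ (-p) := by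
  refine ((integrable_one_add_sq_div_rpow_neg ha (p := p - 1 / 2) (by linarith)).const_mul
    √a).mono' (by fun_prop) (Filter.Eventually.of_forall fun x => ?_)
  have hb : 0 < 1 + x ^ 2 / a := by positivity
  have hx : |x| ≤ √a * (1 + x ^ 2 / a) ^ (1 / 2 : ℝ) := by
    rw [← Real.sqrt_eq_rpow, ← Real.sqrt_mul ha.le, ← Real.sqrt_sq_eq_abs]
    exact Real.sqrt_le_sqrt (by field_simp; linarith)
  calc ‖x * (1 + x ^ 2 / a) ^ (-p)‖ = |x| * (1 + x ^ 2 / a) ^ (-p) := by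
        rw [norm_mul, Real.norm_eq_abs, Real.norm_of_nonneg (by positivity)]
    _ ≤ √a * (1 + x ^ 2 / a) ^ (1 / 2 : ℝ) * (1 + x ^ 2 / a) ^ (-p) := by gcongr
    _ = √a * (1 + x ^ 2 / a) ^ (-(p - 1 / 2)) := by
        rw [mul_assoc, ← Real.rpow_add hb]; ring_nf

lemma norm_exp_I_mul_ofReal_mul (t x : ℝ) : ‖exp (I * t * x)‖ = 1 := by
  simpa [mul_assoc] using norm_exp_I_mul_ofReal (t * x)

lemma MeasureTheory.Integrable.exp_I_mul_mul {g : ℝ → ℂ} (hg : Integrable g) (t : ℝ) :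
    Integrable fun x : ℝ => exp (I * t * x) * g x :=
  hg.bdd_mul (c := 1) (by fun_prop)
    (Filter.Eventually.of_forall fun x => (norm_exp_I_mul_ofReal_mul t x).le)

lemma integral_exp_I_mul_mul_deriv {f f' : ℝ → ℂ} (hf : ∀ x, HasDerivAt f (f' x) x)
    (hfi : Integrable f) (hf'i : Integrable f') (t : ℝ) :
    ∫ x : ℝ, exp (I * t * x) * f' x = -(I * t) * ∫ x : ℝ, exp (I * t * x) * f x := by
  have hexp (x : ℝ) : HasDerivAt (fun x : ℝ => exp (I * t * x)) (I * t * exp (I * t * x)) x := by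
    simpa [mul_comm] using ((hasDerivAt_id (x : ℂ)).const_mul (I * t)).cexp.comp_ofReal
  rw [integral_mul_deriv_eq_deriv_mul_of_integrable (fun x _ => hexp x) (fun x _ => hf x)
    (hf'i.exp_I_mul_mul t)
    (by simpa only [Pi.mul_def, mul_assoc] using (hfi.exp_I_mul_mul t).const_mul (I * t))
    (hfi.exp_I_mul_mul t), ← integral_const_mul, ← integral_neg]
  simp only [neg_mul, mul_assoc]

lemma integral_eq_smul_integral_comp_mul_left {E : Type*} [NormedAddCommGroup E] [NormedSpace ℝ E]
    (g : ℝ → E) {a : ℝ} (ha : 0 < a) : ∫ x : ℝ, g x = a • ∫ y : ℝ, g (a * y) := by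
  rw [Measure.integral_comp_mul_left, abs_of_pos (inv_pos.2 ha), smul_smul,
    mul_inv_cancel₀ ha.ne', one_smul]

noncomputable def studentConst (ν : ℝ) : ℝ :=
  Real.Gamma ((ν + 1) / 2) / (Real.sqrt (Real.pi * ν) * Real.Gamma (ν / 2))

lemma studentDensity_eq (ν x : ℝ) :
    studentDensity ν x = studentConst ν * (1 + x ^ 2 / ν) ^ (-((ν + 1) / 2)) := by
  rw [studentDensity, studentConst, neg_div]

lemma studentConst_add_two {ν : ℝ} (hν : 0 < ν) :
    studentConst (ν + 2) = (ν + 1) / ν * √(ν / (ν + 2)) * studentConst ν := by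
  have hΓ₁ : Real.Gamma ((ν + 2 + 1) / 2) = (ν + 1) / 2 * Real.Gamma ((ν + 1) / 2) := by
    rw [show (ν + 2 + 1) / 2 = (ν + 1) / 2 + 1 by ring, Real.Gamma_add_one (by positivity)]
  have hΓ₂ : Real.Gamma ((ν + 2) / 2) = ν / 2 * Real.Gamma (ν / 2) := by
    rw [show (ν + 2) / 2 = ν / 2 + 1 by ring, Real.Gamma_add_one (by positivity)]
  have hsqrt : √(π * ν) = √(ν / (ν + 2)) * √(π * (ν + 2)) := by
    rw [← Real.sqrt_mul (by positivity)]
    congr 1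
    field_simp
  have hΓ_ne : Real.Gamma (ν / 2) ≠ 0 := (Real.Gamma_pos_of_pos (half_pos hν)).ne'
  have hsqrt_ne : √(π * (ν + 2)) ≠ 0 := (Real.sqrt_pos.2 (by positivity)).ne'
  rw [studentConst, studentConst, hΓ₁, hΓ₂, hsqrt]
  field_simp

lemma integrable_studentDensity {ν : ℝ} (hν : 0 < ν) : Integrable (studentDensity ν) := by
  rw [funext (studentDensity_eq ν)]
  exact (integrable_one_add_sq_div_rpow_neg hν (by linarith)).const_mul _

lemma integrable_mul_studentDensity {ν : ℝ} (hν : 1 < ν) :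
    Integrable fun x : ℝ => x * studentDensity ν x := by
  simpa only [studentDensity_eq, mul_left_comm] using
    (integrable_mul_one_add_sq_div_rpow_neg (by linarith) (p := (ν + 1) / 2)
      (by linarith)).const_mul (studentConst ν)

lemma hasDerivAt_studentDensity {ν : ℝ} (hν : 0 < ν) (x : ℝ) :
    HasDerivAt (studentDensity ν)
      (-((ν + 1) / ν) * studentConst ν * x * (1 + x ^ 2 / ν) ^ (-((ν + 3) / 2))) x := by
  have hbase : HasDerivAt (fun x : ℝ => 1 + x ^ 2 / ν) (2 * x / ν) x := by
    simpa using ((hasDerivAt_pow 2 x).div_const ν).const_add 1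
  rw [funext (studentDensity_eq ν)]
  refine ((hbase.rpow_const (p := -((ν + 1) / 2)) (Or.inl (by positivity))).const_mul
    (studentConst ν)).congr_deriv ?_
  rw [show -((ν + 1) / 2) - 1 = -((ν + 3) / 2) by ring]
  field_simp

lemma hasDerivAt_studentDensity_sqrt_mul {ν : ℝ} (hν : 0 < ν) (y : ℝ) :
    HasDerivAt (studentDensity ν) (-y * studentDensity (ν + 2) y) (√(ν / (ν + 2)) * y) := by
  convert hasDerivAt_studentDensity hν (√(ν / (ν + 2)) * y) using 1
  have hs : √(ν / (ν + 2)) ^ 2 = ν / (ν + 2) := Real.sq_sqrt (by positivity)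
  have hbase : 1 + (√(ν / (ν + 2)) * y) ^ 2 / ν = 1 + y ^ 2 / (ν + 2) := by
    rw [mul_pow, hs]
    field_simp
  rw [studentDensity_eq, studentConst_add_two hν, hbase, show ν + 2 + 1 = ν + 3 by ring]
  ring

lemma integrable_deriv_studentDensity {ν : ℝ} (hν : 0 < ν) :
    Integrable (deriv (studentDensity ν)) := by
  have hs : √(ν / (ν + 2)) ≠ 0 := (Real.sqrt_pos.2 (by positivity)).ne'
  rw [← integrable_comp_mul_left_iff _ hs]
  simpa only [(hasDerivAt_studentDensity_sqrt_mul hν _).deriv, neg_mul] using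
    (integrable_mul_studentDensity (by linarith : 1 < ν + 2)).fun_neg

theorem studentCharFun_recursion (ν : ℝ) (hν : 0 < ν) (t : ℝ) (ht : 0 < t) :
    Integrable (fun y : ℝ => (y : ℂ) *
      Complex.exp (Complex.I * t * Real.sqrt (ν / (ν + 2)) * y) *
      (studentDensity (ν + 2) y : ℂ)) ∧
    (∫ x : ℝ, Complex.exp (Complex.I * t * x) * (studentDensity ν x : ℂ)) =
      -(Complex.I / t) * Real.sqrt (ν / (ν + 2)) *
        ∫ y : ℝ, (y : ℂ) * Complex.exp (Complex.I * t * Real.sqrt (ν / (ν + 2)) * y) *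
          (studentDensity (ν + 2) y : ℂ) := by
  have hs : 0 < √(ν / (ν + 2)) := Real.sqrt_pos.2 (by positivity)
  have hmoment : Integrable fun y : ℝ => ((y * studentDensity (ν + 2) y : ℝ) : ℂ) :=
    (integrable_mul_studentDensity (by linarith)).ofReal
  refine ⟨(hmoment.exp_I_mul_mul (t * √(ν / (ν + 2)))).congr
    (Filter.Eventually.of_forall fun y => by push_cast; ring_nf), ?_⟩
  have hibp := integral_exp_I_mul_mul_deriv
    (fun x => ((hasDerivAt_studentDensity hν x).differentiableAt.hasDerivAt.ofReal_comp))
    (integrable_studentDensity hν).ofReal (integrable_deriv_studentDensity hν).ofReal t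
  have hsubst : ∫ x : ℝ, exp (I * t * x) * ((deriv (studentDensity ν) x : ℝ) : ℂ) =
      -√(ν / (ν + 2)) * ∫ y : ℝ, (y : ℂ) * exp (I * t * √(ν / (ν + 2)) * y) *
        (studentDensity (ν + 2) y : ℂ) := by
    rw [integral_eq_smul_integral_comp_mul_left _ hs, real_smul, ← integral_const_mul,
      ← integral_const_mul]
    congr 1 with y
    rw [(hasDerivAt_studentDensity_sqrt_mul hν y).deriv]
    push_cast
    ring_nf
  rw [hsubst, neg_mul, neg_mul, neg_inj] at hibp
  have ht' : (t : ℂ) ≠ 0 := ofReal_ne_zero.2 ht.ne'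
  rw [mul_assoc, hibp]
  field_simp
  linear_combination (∫ x : ℝ, exp (I * t * x) * (studentDensity ν x : ℂ)) * I_sq
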